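/- arXiv:2108.03682 — 4 statements merged into one kernel-verified Lean document; each statement's English description precedes it below -/
import Mathlib

section
/- For each integer i ≥ 0 there is a constant c_i (independent of N) such that for all x in the N-dimensional hypercube, the i-step simple random walk transition probability satisfies D^{*i}(x) ≤ c_i · N^{-⌈i/2⌉}. -/
/-!
Write `|x|` for the Hamming weight and `e_j` for the `j`-th unit vector. Since
`D^{*(i+1)}(x) = N⁻¹ ∑_j D^{*i}(x - e_j)`, where `x - e_j` has weight `|x| - 1` for the `|x|`
coordinates `j` in the support of `x` and weight `|x| + 1` for the others, induction on `i` gives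
the sharper bound `D^{*i}(x) ≤ (i+1)! N^{-⌈(i + |x|)/2⌉}`. Indeed `D^{*(i+1)}(x) = 0` unless
`|x| ≤ i + 1`, so the at most `i + 1` downward terms contribute `(i+1) N⁻¹ (i+1)! N^{-⌊(i + |x|)/2⌋}`
and the at most `N` upward ones `N · N⁻¹ (i+1)! N^{-⌊(i + |x|)/2⌋ - 1}`; the sum is
`(i+2)! N^{-⌈(i + 1 + |x|)/2⌉}`.
-/

/-- Simple random walk transition probability on the hypercube (real-valued). -/
noncomputable def hcD (N : ℕ) (x : Fin N → ZMod 2) : ℝ :=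
  if hammingNorm x = 1 then (N : ℝ)⁻¹ else 0

/-- `i`-fold convolution power `D^{*i}`, the `i`-step transition probability of
simple random walk on the hypercube. -/
noncomputable def hcDpow (N : ℕ) : ℕ → (Fin N → ZMod 2) → ℝ
  | 0 => fun x => if x = 0 then 1 else 0
  | (i + 1) => fun x => ∑ y, hcD N (x - y) * hcDpow N i y

open Finset

theorem ZMod.eq_zero_or_eq_one (a : ZMod 2) : a = 0 ∨ a = 1 := by
  revert a; decide

section Hypercube

variable {ι : Type*} [Fintype ι] [DecidableEq ι]

theorem hammingNorm_eq_one_iff_exists_single {z : ι → ZMod 2} :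
    hammingNorm z = 1 ↔ ∃ j, Pi.single j 1 = z := by
  refine card_eq_one.trans (exists_congr fun j => ?_)
  simp only [Finset.ext_iff, funext_iff, mem_filter, mem_univ, true_and, mem_singleton,
    Pi.single_apply]
  refine forall_congr' fun i => ?_
  split_ifs with hij <;> rcases (z i).eq_zero_or_eq_one with h | h <;> rw [h] <;> simp [hij]

theorem hammingNorm_sub_single_of_eq_zero {x : ι → ZMod 2} {j : ι} (hj : x j = 0) :
    hammingNorm (x - Pi.single j 1) = hammingNorm x + 1 := by
  have hsupp : (univ.filter fun i => (x - Pi.single j 1 : ι → ZMod 2) i ≠ 0) =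
      insert j (univ.filter fun i => x i ≠ 0) := by
    ext i
    by_cases hij : i = j
    · subst hij; simp [hj]
    · simp [hij]
  rw [hammingNorm, hsupp, card_insert_of_notMem (by simp [hj]), hammingNorm]

theorem hammingNorm_sub_single_of_ne_zero {x : ι → ZMod 2} {j : ι} (hj : x j ≠ 0) :
    hammingNorm (x - Pi.single j 1) + 1 = hammingNorm x := by
  have hj' : (x - Pi.single j 1 : ι → ZMod 2) j = 0 := by
    simp [(x j).eq_zero_or_eq_one.resolve_left hj]
  have hcancel : x - Pi.single j 1 - Pi.single j 1 = x := by
    ext i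
    simp [sub_sub, CharTwo.add_self_eq_zero]
  rw [← hammingNorm_sub_single_of_eq_zero hj', hcancel]

theorem sum_sub_single_le (f : (ι → ZMod 2) → ℝ) (m : ℕ) {C r : ℝ} (hC : 0 ≤ C) (hr : 0 < r)
    (hcard : (Fintype.card ι : ℝ) ≤ r) (hf : ∀ y, f y ≤ C / r ^ ((m + hammingNorm y + 1) / 2))
    (x : ι → ZMod 2) :
    ∑ j, f (x - Pi.single j 1) ≤ (hammingNorm x + 1) * (C / r ^ ((m + hammingNorm x) / 2)) := by
  set a := (m + hammingNorm x) / 2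
  have h_down : ∀ j ∈ univ.filter (fun j => x j ≠ 0), f (x - Pi.single j 1) ≤ C / r ^ a := by
    intro j hj
    have := hammingNorm_sub_single_of_ne_zero (mem_filter.1 hj).2
    convert hf _ using 3
    omega
  have h_up : ∀ j ∈ univ.filter (fun j => ¬x j ≠ 0), f (x - Pi.single j 1) ≤ C / r ^ (a + 1) := by
    intro j hj
    have := hammingNorm_sub_single_of_eq_zero (not_not.1 (mem_filter.1 hj).2)
    convert hf _ using 3
    omega
  have h_down_card : ((univ.filter fun j => x j ≠ 0).card : ℝ) = hammingNorm x := rfl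
  have h_up_card : ((univ.filter fun j => ¬x j ≠ 0).card : ℝ) ≤ r :=
    le_trans (by exact_mod_cast card_le_univ _) hcard
  rw [← sum_filter_add_sum_filter_not univ (fun j => x j ≠ 0)]
  calc _ ≤ (hammingNorm x : ℝ) * (C / r ^ a) + r * (C / r ^ (a + 1)) := by
        grw [sum_le_card_nsmul _ _ _ h_down, sum_le_card_nsmul _ _ _ h_up, nsmul_eq_mul,
          nsmul_eq_mul, h_down_card, h_up_card]
    _ = (hammingNorm x + 1) * (C / r ^ a) := by
        rw [pow_succ]
        field_simp

end Hypercube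

theorem sum_hcD_sub_mul (N : ℕ) (x : Fin N → ZMod 2) (g : (Fin N → ZMod 2) → ℝ) :
    ∑ y, hcD N (x - y) * g y = (N : ℝ)⁻¹ * ∑ j, g (x - Pi.single j 1) := by
  have hsingle_inj : Function.Injective fun j : Fin N => (Pi.single j 1 : Fin N → ZMod 2) :=
    fun j k h => by by_contra hjk; simpa [Pi.single_apply, hjk] using congr_fun h j
  have hsphere : (univ.filter fun z : Fin N → ZMod 2 => hammingNorm z = 1) =
      univ.image fun j => Pi.single j 1 := by
    ext z; simp [hammingNorm_eq_one_iff_exists_single]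
  rw [← Fintype.sum_equiv (Equiv.subLeft x) (fun z => hcD N z * g (x - z)) _
      (fun z => by simp), ← sum_image (f := fun z => g (x - z)) hsingle_inj.injOn, ← hsphere,
    sum_filter, mul_sum]
  simp only [hcD, ite_mul, zero_mul, mul_ite, mul_zero]

theorem hcDpow_succ_eq (N i : ℕ) (x : Fin N → ZMod 2) :
    hcDpow N (i + 1) x = (N : ℝ)⁻¹ * ∑ j, hcDpow N i (x - Pi.single j 1) :=
  sum_hcD_sub_mul N x (hcDpow N i)

theorem hcDpow_eq_zero_of_lt {N i : ℕ} {x : Fin N → ZMod 2} (h : i < hammingNorm x) :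
    hcDpow N i x = 0 := by
  induction i generalizing x with
  | zero => simp [hcDpow, ← hammingNorm_pos_iff, h]
  | succ i ih =>
    rw [hcDpow_succ_eq]
    refine mul_eq_zero_of_right _ (sum_eq_zero fun j _ => ih ?_)
    by_cases hj : x j = 0
    · have := hammingNorm_sub_single_of_eq_zero hj; omega
    · have := hammingNorm_sub_single_of_ne_zero hj; omega

open Nat in
-- `(k + 1) / 2` is `⌈k / 2⌉` in `ℕ`.
theorem hcDpow_le_factorial_div {N : ℕ} (hN : 0 < N) (i : ℕ) (x : Fin N → ZMod 2) :
    hcDpow N i x ≤ (i + 1)! / (N : ℝ) ^ ((i + hammingNorm x + 1) / 2) := by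
  have hN' : (0 : ℝ) < N := by exact_mod_cast hN
  induction i generalizing x with
  | zero =>
    by_cases hx : x = 0
    · simp [hcDpow, hx]
    · simp only [hcDpow, if_neg hx]; positivity
  | succ i ih =>
    by_cases hx : i + 1 < hammingNorm x
    · rw [hcDpow_eq_zero_of_lt hx]; positivity
    have hsum := sum_sub_single_le (hcDpow N i) i (by positivity) hN' (by simp) ih x
    have hexp : (i + 1 + hammingNorm x + 1) / 2 = (i + hammingNorm x) / 2 + 1 := by omega
    have hnorm : (hammingNorm x + 1 : ℝ) ≤ i + 2 := by
      exact_mod_cast (by omega : hammingNorm x + 1 ≤ i + 2)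
    calc hcDpow N (i + 1) x
        ≤ (N : ℝ)⁻¹ * ((i + 2) * ((i + 1)! / (N : ℝ) ^ ((i + hammingNorm x) / 2))) := by
          rw [hcDpow_succ_eq]; grw [hsum, hnorm]
      _ = (i + 1 + 1)! / (N : ℝ) ^ ((i + 1 + hammingNorm x + 1) / 2) := by
          rw [hexp, pow_succ, factorial_succ (i + 1)]; push_cast; field_simp; ring

theorem rw_transition_bound (i : ℕ) :
    ∃ c : ℝ, 0 < c ∧ ∀ N : ℕ, 0 < N → ∀ x : Fin N → ZMod 2,
      hcDpow N i x ≤ c / (N : ℝ) ^ ((i + 1) / 2) := by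
  refine ⟨(i + 1).factorial, by positivity, fun N hN x => ?_⟩
  have hN1 : (1 : ℝ) ≤ N := by exact_mod_cast hN
  grw [hcDpow_le_factorial_div hN i x]
  gcongr
  omega
end

section
/- For every integer j ≥ 1 there is a constant c_j such that for all N and all t ∈ [0,1], (1/2^N) Σ_{k∈Q^N, k≠0} 1/(1 - t·D̂(k))^j ≤ c_j, where D̂(k) = 1 - 2|k|/N. -/
/-!
Since `1 - t D̂(k) = (1 - t)(1 - |k|/N) + t |k|/N ≥ |k|/N`, the sum is at most
`∑_{m=1}^N C(N,m) (N/m)^j`. The identity `C(N+j,j) C(N,m) = C(N+j,m+j) C(m+j,j)` together with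
`N^j ≤ j! C(N+j,j)` and `j! C(m+j,j) ≤ (m+j)^j ≤ ((j+1)m)^j` bounds the `m`-th term by
`(j+1)^j C(N+j,m+j)`, and these binomial coefficients sum to at most `2^(N+j)`.
-/

/-- Fourier transform of the simple random walk step distribution on the
hypercube: `D̂(k) = 1 - 2|k|/N`, with `|k|` the Hamming weight of `k`. -/
noncomputable def hcDhat (N : ℕ) (k : Fin N → ZMod 2) : ℝ :=
  1 - 2 * (hammingNorm k : ℝ) / (N : ℝ)

open Finset Nat

theorem choose_mul_pow_le (N m j : ℕ) (hm : 0 < m) :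
    N.choose m * N ^ j ≤ (j + 1) ^ j * (N + j).choose (m + j) * m ^ j := by
  have hpascal : (N + j).choose j * N.choose m = (N + j).choose (m + j) * (m + j).choose j := by
    simpa using (choose_mul (n := N + j) (k := m + j) (s := j) (by omega)).symm
  have hlow : N ^ j ≤ (N + j).descFactorial j :=
    (Nat.pow_le_pow_left (by omega) j).trans (pow_sub_le_descFactorial (N + j) j)
  have hup : (m + j).descFactorial j ≤ ((j + 1) * m) ^ j :=
    (descFactorial_le_pow _ _).trans (Nat.pow_le_pow_left (by nlinarith) _)
  calc N.choose m * N ^ j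
      ≤ N.choose m * (N + j).descFactorial j := Nat.mul_le_mul_left _ hlow
    _ = (N + j).choose (m + j) * (m + j).descFactorial j := by
        rw [descFactorial_eq_factorial_mul_choose, descFactorial_eq_factorial_mul_choose,
          mul_left_comm, mul_comm (N.choose m), hpascal]; ring
    _ ≤ (N + j).choose (m + j) * ((j + 1) * m) ^ j := Nat.mul_le_mul_left _ hup
    _ = (j + 1) ^ j * (N + j).choose (m + j) * m ^ j := by rw [mul_pow]; ring

theorem sum_range_choose_add_le (N j : ℕ) :
    ∑ m ∈ range (N + 1), (N + j).choose (j + m) ≤ 2 ^ (N + j) := by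
  have h := sum_range_add (fun r => (N + j).choose r) j (N + 1)
  rw [show j + (N + 1) = N + j + 1 by omega, sum_range_choose] at h
  omega

theorem card_hammingNorm_eq_le_choose {ι : Type*} [Fintype ι] [DecidableEq ι] (m : ℕ) :
    #{k : ι → ZMod 2 | hammingNorm k = m} ≤ (Fintype.card ι).choose m := by
  rw [← Finset.card_univ, ← card_powersetCard]
  refine card_le_card_of_injOn (fun k => ({i | k i ≠ 0} : Finset ι)) (fun k hk => ?_)
    fun a _ b _ hab => ?_
  · exact mem_powersetCard.2 ⟨subset_univ _, (mem_filter.1 hk).2 ▸ rfl⟩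
  · funext i
    have hi := congrArg (i ∈ ·) hab
    simp only [mem_filter, mem_univ, true_and, eq_iff_iff] at hi
    revert hi; generalize a i = x; generalize b i = y; revert x y; decide

theorem sum_hammingNorm_le_sum_choose {ι : Type*} [Fintype ι] [DecidableEq ι] (F : ℕ → ℝ)
    (hF : ∀ m, 0 ≤ F m) :
    ∑ k ∈ univ.filter (fun k : ι → ZMod 2 => k ≠ 0), F (hammingNorm k) ≤
      ∑ m ∈ Icc 1 (Fintype.card ι), (Fintype.card ι).choose m * F m := by
  have hmaps : ∀ k ∈ univ.filter (fun k : ι → ZMod 2 => k ≠ 0),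
      hammingNorm k ∈ Icc 1 (Fintype.card ι) :=
    fun k hk =>
      mem_Icc.2 ⟨hammingNorm_pos_iff.2 (mem_filter.1 hk).2, hammingNorm_le_card_fintype⟩
  rw [← sum_fiberwise_of_maps_to hmaps]
  refine sum_le_sum fun m _ => ?_
  rw [sum_congr rfl fun k hk => by rw [(mem_filter.1 hk).2], sum_const, nsmul_eq_mul]
  have hcard := (card_le_card (filter_subset_filter (fun k : ι → ZMod 2 => hammingNorm k = m)
    (filter_subset (fun k : ι → ZMod 2 => k ≠ 0) univ))).trans
    (card_hammingNorm_eq_le_choose m)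
  exact mul_le_mul_of_nonneg_right (by exact_mod_cast hcard) (hF m)

theorem sum_choose_mul_div_pow_le (N j : ℕ) :
    ∑ m ∈ Icc 1 N, (N.choose m : ℝ) * ((N : ℝ) / m) ^ j ≤ (j + 1) ^ j * 2 ^ (N + j) := by
  have hterm : ∀ m ∈ Icc 1 N,
      (N.choose m : ℝ) * ((N : ℝ) / m) ^ j ≤ (j + 1) ^ j * (N + j).choose (j + m) := by
    intro m hm
    have hm0 : (0 : ℝ) < m := by exact_mod_cast (mem_Icc.1 hm).1
    rw [div_pow, ← mul_div_assoc, div_le_iff₀ (by positivity), add_comm j m]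
    exact_mod_cast choose_mul_pow_le N m j (mem_Icc.1 hm).1
  calc _ ≤ ∑ m ∈ Icc 1 N, ((j : ℝ) + 1) ^ j * (N + j).choose (j + m) := sum_le_sum hterm
    _ ≤ ∑ m ∈ range (N + 1), ((j : ℝ) + 1) ^ j * (N + j).choose (j + m) :=
        sum_le_sum_of_subset_of_nonneg (fun m hm => by simp at hm ⊢; omega)
          fun _ _ _ => by positivity
    _ ≤ (j + 1) ^ j * 2 ^ (N + j) := by
        rw [← mul_sum]; gcongr; exact_mod_cast sum_range_choose_add_le N j

theorem div_le_one_sub_mul_hcDhat {N : ℕ} (hN : 0 < N) (k : Fin N → ZMod 2) {t : ℝ}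
    (ht : t ∈ Set.Icc (0 : ℝ) 1) : (hammingNorm k : ℝ) / N ≤ 1 - t * hcDhat N k := by
  have hN' : (0 : ℝ) < N := by exact_mod_cast hN
  have hkN : (hammingNorm k : ℝ) / N ≤ 1 := by
    rw [div_le_one hN']; exact_mod_cast (hammingNorm_le_card_fintype (x := k)).trans_eq (by simp)
  have hconvex : 1 - t * hcDhat N k - hammingNorm k / N =
      (1 - t) * (1 - hammingNorm k / N) + t * (hammingNorm k / N) := by
    unfold hcDhat; ring
  nlinarith [ht.1, ht.2, div_nonneg (Nat.cast_nonneg (hammingNorm k)) hN'.le]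

theorem inv_one_sub_mul_hcDhat_pow_le {N : ℕ} (hN : 0 < N) {k : Fin N → ZMod 2} (hk : k ≠ 0)
    {t : ℝ} (ht : t ∈ Set.Icc (0 : ℝ) 1) (j : ℕ) :
    (1 - t * hcDhat N k)⁻¹ ^ j ≤ ((N : ℝ) / hammingNorm k) ^ j := by
  have hpos : (0 : ℝ) < hammingNorm k / N := by
    have : 0 < hammingNorm k := hammingNorm_pos_iff.2 hk
    positivity
  have hlow := div_le_one_sub_mul_hcDhat hN k ht
  rw [← inv_div]
  exact pow_le_pow_left₀ (inv_nonneg.2 (hpos.trans_le hlow).le) (inv_anti₀ hpos hlow) j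

theorem rw_resolvent_sum_bound_general (j : ℕ) :
    ∃ c : ℝ, ∀ N : ℕ, 0 < N → ∀ t : ℝ, t ∈ Set.Icc (0 : ℝ) 1 →
      ((2 : ℝ) ^ N)⁻¹ *
        ∑ k ∈ Finset.univ.filter (fun k : Fin N → ZMod 2 => k ≠ 0),
          (1 - t * hcDhat N k)⁻¹ ^ j ≤ c := by
  refine ⟨(j + 1) ^ j * 2 ^ j, fun N hN t ht => ?_⟩
  rw [inv_mul_le_iff₀ (by positivity)]
  calc _ ≤ ∑ k ∈ univ.filter (fun k : Fin N → ZMod 2 => k ≠ 0),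
          ((N : ℝ) / hammingNorm k) ^ j :=
        sum_le_sum fun k hk => inv_one_sub_mul_hcDhat_pow_le hN (mem_filter.1 hk).2 ht j
    _ ≤ ∑ m ∈ Icc 1 N, (N.choose m : ℝ) * ((N : ℝ) / m) ^ j :=
        (sum_hammingNorm_le_sum_choose (fun m => ((N : ℝ) / m) ^ j)
          fun m => by positivity).trans_eq (by rw [Fintype.card_fin])
    _ ≤ (j + 1) ^ j * 2 ^ (N + j) := sum_choose_mul_div_pow_le N j
    _ = 2 ^ N * ((j + 1) ^ j * 2 ^ j) := by ring

theorem rw_resolvent_sum_bound (j : ℕ) (hj : 1 ≤ j) :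
    ∃ c : ℝ, ∀ N : ℕ, 0 < N → ∀ t : ℝ, t ∈ Set.Icc (0 : ℝ) 1 →
      ((2 : ℝ) ^ N)⁻¹ *
        ∑ k ∈ Finset.univ.filter (fun k : Fin N → ZMod 2 => k ≠ 0),
          (1 - t * hcDhat N k)⁻¹ ^ j ≤ c :=
  rw_resolvent_sum_bound_general j
end

section
/- Fractional Taylor bound (zeroth order): let ε ∈ (0,1), f(z) = Σ_{n≥0} a_n z^n, ρ > 0, and suppose A_1^{(ε)}(ρ) := Σ_{n≥1} n^ε |a_n| ρ^n < ∞. Then for any complex z with |z| ≤ ρ, |f(z) - f(ρ)| ≤ 2^{1-ε} A_1^{(ε)}(ρ) |1 - z/ρ|^ε. -/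
/-!
Write `z = ρ w` with `‖w‖ ≤ 1`. Each term `wⁿ - 1` is bounded both by `2` and, through the
geometric sum, by `n ‖1 - w‖`; the geometric mean of the two bounds with weights `1 - ε` and `ε`
gives `‖wⁿ - 1‖ ≤ 2^{1-ε} n^ε ‖1 - w‖^ε`, and summing against `|aₙ| ρⁿ` gives the theorem.
-/

open Finset

lemma Real.le_rpow_mul_rpow_of_le_of_le {x a b t : ℝ} (hx : 0 ≤ x) (ha : x ≤ a) (hb : x ≤ b)
    (ht₀ : 0 ≤ t) (ht₁ : t ≤ 1) : x ≤ a ^ t * b ^ (1 - t) :=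
  calc x = x ^ t * x ^ (1 - t) := by
        rw [← Real.rpow_add' hx (by norm_num), add_sub_cancel, Real.rpow_one]
    _ ≤ a ^ t * b ^ (1 - t) := by
        have := hx.trans ha
        gcongr

section NormedRing

variable {R : Type*} [NormedRing R] [NormOneClass R]

lemma norm_pow_sub_one_le_two {w : R} (hw : ‖w‖ ≤ 1) (n : ℕ) : ‖w ^ n - 1‖ ≤ 2 :=
  calc ‖w ^ n - 1‖ ≤ ‖w ^ n‖ + ‖(1 : R)‖ := norm_sub_le _ _
    _ ≤ 1 + 1 := by
        gcongr
        · exact (norm_pow_le w n |>.trans (pow_le_one₀ (norm_nonneg w) hw))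
        · rw [norm_one]
    _ = 2 := one_add_one_eq_two

lemma norm_pow_sub_one_le_mul {w : R} (hw : ‖w‖ ≤ 1) (n : ℕ) :
    ‖w ^ n - 1‖ ≤ n * ‖1 - w‖ := by
  have hsum : ‖∑ i ∈ range n, w ^ i‖ ≤ n :=
    calc ‖∑ i ∈ range n, w ^ i‖ ≤ ∑ i ∈ range n, ‖w ^ i‖ := norm_sum_le _ _
      _ ≤ ∑ _i ∈ range n, (1 : ℝ) :=
          sum_le_sum fun i _ => (norm_pow_le w i).trans (pow_le_one₀ (norm_nonneg w) hw)
      _ = n := by simp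
  rw [← geom_sum_mul, norm_sub_rev 1 w]
  exact (norm_mul_le _ _).trans (by gcongr)

lemma norm_pow_sub_one_le_rpow {w : R} (hw : ‖w‖ ≤ 1) (n : ℕ) {ε : ℝ} (hε₀ : 0 ≤ ε)
    (hε₁ : ε ≤ 1) : ‖w ^ n - 1‖ ≤ 2 ^ (1 - ε) * (n : ℝ) ^ ε * ‖1 - w‖ ^ ε := by
  have h := Real.le_rpow_mul_rpow_of_le_of_le (norm_nonneg _) (norm_pow_sub_one_le_mul hw n)
    (norm_pow_sub_one_le_two hw n) hε₀ hε₁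
  rw [Real.mul_rpow n.cast_nonneg (norm_nonneg _)] at h
  linarith

end NormedRing

lemma summable_of_summable_rpow_mul {f : ℕ → ℝ} {ε : ℝ} (hε : 0 ≤ ε) (hf : ∀ n, 0 ≤ f n)
    (h : Summable fun n : ℕ => (n : ℝ) ^ ε * f n) : Summable f := by
  refine h.of_norm_bounded_eventually_nat (Filter.eventually_atTop.2 ⟨1, fun n hn => ?_⟩)
  rw [Real.norm_of_nonneg (hf n)]
  exact le_mul_of_one_le_left (hf n) (Real.one_le_rpow (by exact_mod_cast hn) hε)

lemma summable_mul_pow_of_norm_le {𝕜 : Type*} [NormedField 𝕜] [CompleteSpace 𝕜] {a : ℕ → 𝕜}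
    {r : ℝ} (ha : Summable fun n => ‖a n‖ * r ^ n) {z : 𝕜} (hz : ‖z‖ ≤ r) :
    Summable fun n => a n * z ^ n :=
  ha.of_norm_bounded fun n => by
    rw [norm_mul, norm_pow]
    gcongr

/-- Fractional Taylor bound (zeroth order): if `A_1^{(ε)}(ρ) = Σ_{n≥1} n^ε |a_n| ρ^n < ∞`
and `ε ∈ (0,1)`, then for `|z| ≤ ρ`,
`|f(z) - f(ρ)| ≤ 2^{1-ε} A_1^{(ε)}(ρ) |1 - z/ρ|^ε`. -/
theorem fractional_taylor_zeroth (ε ρ : ℝ) (hε : ε ∈ Set.Ioo (0 : ℝ) 1) (hρ : 0 < ρ)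
    (a : ℕ → ℂ)
    (hA : Summable fun n : ℕ => (n : ℝ) ^ ε * ‖a n‖ * ρ ^ n)
    (z : ℂ) (hz : ‖z‖ ≤ ρ) :
    ‖(∑' n : ℕ, a n * z ^ n) - ∑' n : ℕ, a n * (ρ : ℂ) ^ n‖
      ≤ 2 ^ (1 - ε) * (∑' n : ℕ, (n : ℝ) ^ ε * ‖a n‖ * ρ ^ n) *
          ‖1 - z / (ρ : ℂ)‖ ^ ε := by
  obtain ⟨hε₀, hε₁⟩ := hε
  have hρ' : (ρ : ℂ) ≠ 0 := Complex.ofReal_ne_zero.2 hρ.ne'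
  have hnormρ : ‖(ρ : ℂ)‖ = ρ := by simp [hρ.le]
  have hS : Summable fun n => ‖a n‖ * ρ ^ n :=
    summable_of_summable_rpow_mul hε₀.le (fun n => by positivity)
      (by simpa only [mul_assoc] using hA)
  set w := z / ρ
  have hw : ‖w‖ ≤ 1 := by
    rw [norm_div, hnormρ]
    exact div_le_one_of_le₀ hz hρ.le
  have hterm : ∀ n : ℕ, ‖a n * z ^ n - a n * (ρ : ℂ) ^ n‖
      ≤ 2 ^ (1 - ε) * ‖1 - w‖ ^ ε * ((n : ℝ) ^ ε * ‖a n‖ * ρ ^ n) := by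
    intro n
    have hzw : z = ρ * w := (mul_div_cancel₀ z hρ').symm
    calc ‖a n * z ^ n - a n * (ρ : ℂ) ^ n‖ = ‖a n * (ρ : ℂ) ^ n * (w ^ n - 1)‖ := by
          rw [hzw]
          congr 1
          ring
      _ = ‖a n‖ * ρ ^ n * ‖w ^ n - 1‖ := by rw [norm_mul, norm_mul, norm_pow, hnormρ]
      _ ≤ ‖a n‖ * ρ ^ n * (2 ^ (1 - ε) * (n : ℝ) ^ ε * ‖1 - w‖ ^ ε) := by
          gcongr
          exact norm_pow_sub_one_le_rpow hw n hε₀.le hε₁.le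
      _ = _ := by ring
  rw [← (summable_mul_pow_of_norm_le hS hz).tsum_sub (summable_mul_pow_of_norm_le hS hnormρ.le)]
  refine (tsum_of_norm_bounded (hA.mul_left _).hasSum hterm).trans_eq ?_
  rw [tsum_mul_left]
  ring
end

section
/- Consequence of submultiplicativity for the generating function: for n-step self-avoiding walk counts c_n(x) on Q^N, z ∈ [0,∞), and H_z(x) = Σ_{n≥1} c_n(x) z^n, one has z ∂_z H_z(x) ≤ (H_z * G_z)(x), where G_z(x) = δ_{0,x} + H_z(x) and * is convolution on Q^N. -/
/-- The number of `n`-step self-avoiding walks on the hypercube `(ZMod 2)^N`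
from the origin to `x`. -/
noncomputable def sawCountTo (N n : ℕ) (x : Fin N → ZMod 2) : ℕ :=
  Nat.card {ω : Fin (n + 1) → (Fin N → ZMod 2) //
    ω 0 = 0 ∧ ω (Fin.last n) = x ∧
    (∀ i : Fin n, hammingDist (ω i.castSucc) (ω i.succ) = 1) ∧
    Function.Injective ω}

/-- The two-point generating function with the `n = 0` term omitted:
`H_z(x) = Σ_{n≥1} c_n(x) z^n`. -/
noncomputable def Hgen (N : ℕ) (z : ℝ) (x : Fin N → ZMod 2) : ℝ :=
  ∑' n : ℕ, (sawCountTo N (n + 1) x : ℝ) * z ^ (n + 1)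

/-- The full two-point function `G_z(x) = δ_{0,x} + H_z(x)`. -/
noncomputable def Ggen (N : ℕ) (z : ℝ) (x : Fin N → ZMod 2) : ℝ :=
  (if x = 0 then 1 else 0) + Hgen N z x


/-!
Cutting an `(n+1)`-step self-avoiding walk after its `(i+1)`-st step, for each `i ≤ n`, and
translating the second piece back to the origin embeds the walks into pairs of shorter walks that
need not avoid each other; hence `(n+1) c_{n+1}(x) ≤ ∑_{i+j=n} ∑_y c_{i+1}(x-y) c_j(y)`.
Multiplying by `z^{n+1}` and summing over `n` turns the right side into the Cauchy product of
`H_z(x-y)` and `G_z(y)`. All series involved are finite sums: a self-avoiding walk on `(ZMod 2)^N`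
has fewer than `2^N` steps.
-/

open Finset Filter

section Walks

variable {G : Type*} [AddGroup G] {a b : ℕ}

def walkHead (a b : ℕ) (ω : Fin (a + b + 1) → G) : Fin (a + 1) → G :=
  fun i => ω (Fin.castLE (by omega) i)

def walkTail (a b : ℕ) (ω : Fin (a + b + 1) → G) : Fin (b + 1) → G :=
  fun j => ω (Fin.natAdd a j) - walkHead a b ω (Fin.last a)

theorem eq_of_walkHead_eq_of_walkTail_eq {ω ω' : Fin (a + b + 1) → G}
    (hhead : walkHead a b ω = walkHead a b ω') (htail : walkTail a b ω = walkTail a b ω') :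
    ω = ω' := by
  funext k
  rcases le_or_gt k.val a with hk | hk
  · exact congrFun hhead ⟨k, by omega⟩
  · have := congrFun htail ⟨k - a, by omega⟩
    simp only [walkTail, hhead, sub_left_inj] at this
    convert this using 2 <;> exact Fin.ext (by simp; omega)

end Walks

theorem hammingDist_sub_right {ι β : Type*} [Fintype ι] [DecidableEq β] [AddGroup β]
    (u v w : ι → β) : hammingDist (u - w) (v - w) = hammingDist u v :=
  hammingDist_comp (fun i => (· - w i)) fun _ => sub_left_injective

section SelfAvoidingWalks

variable {ι β : Type*} [Fintype ι] [DecidableEq β] [AddCommGroup β] {a b : ℕ}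

def IsSAWTo (n : ℕ) (x : ι → β) (ω : Fin (n + 1) → ι → β) : Prop :=
  ω 0 = 0 ∧ ω (Fin.last n) = x ∧
    (∀ i : Fin n, hammingDist (ω i.castSucc) (ω i.succ) = 1) ∧ Function.Injective ω

noncomputable def sawCount (n : ℕ) (x : ι → β) : ℕ :=
  Nat.card {ω // IsSAWTo n x ω}

theorem sawCountTo_eq_sawCount (N : ℕ) : sawCountTo N = sawCount := rfl

theorem IsSAWTo.head {x : ι → β} {ω : Fin (a + b + 1) → ι → β}
    (hω : IsSAWTo (a + b) x ω) : IsSAWTo a (walkHead a b ω (Fin.last a)) (walkHead a b ω) := by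
  obtain ⟨hzero, -, hstep, hinj⟩ := hω
  refine ⟨hzero, rfl, fun i => ?_, hinj.comp (Fin.castLE_injective _)⟩
  convert hstep (Fin.castLE (by omega) i) using 2 <;> exact congrArg ω (Fin.ext rfl)

theorem IsSAWTo.tail {x : ι → β} {ω : Fin (a + b + 1) → ι → β}
    (hω : IsSAWTo (a + b) x ω) :
    IsSAWTo b (x - walkHead a b ω (Fin.last a)) (walkTail a b ω) := by
  obtain ⟨-, hlast, hstep, hinj⟩ := hω
  refine ⟨sub_self _, by rw [← hlast]; rfl, fun j => ?_, fun i j hij => ?_⟩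
  · rw [walkTail, walkTail, hammingDist_sub_right]
    convert hstep (Fin.natAdd a j) using 3 <;> exact Fin.ext rfl
  · exact Fin.natAdd_injective _ _ (hinj (sub_left_injective hij))

theorem sawCount_zero (x : ι → β) : sawCount 0 x = if x = 0 then 1 else 0 := by
  split_ifs with hx
  · subst hx
    refine Nat.card_eq_one_iff_unique.mpr ⟨⟨fun ω ω' => Subtype.ext <| funext fun i => ?_⟩,
      ⟨⟨0, rfl, rfl, finZeroElim, fun i j _ => Subsingleton.elim (α := Fin 1) i j⟩⟩⟩
    rw [Fin.fin_one_eq_zero i, ω.2.1, ω'.2.1]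
  · exact Nat.card_eq_zero.mpr (Or.inl ⟨fun ω => hx (ω.2.2.1.symm.trans ω.2.1)⟩)

theorem sawCount_eventually_eq_zero [Finite β] :
    ∀ᶠ n in atTop, (sawCount n : (ι → β) → ℕ) = 0 := by
  filter_upwards [eventually_ge_atTop (Nat.card (ι → β))] with n hn
  funext x
  refine Nat.card_eq_zero.mpr (Or.inl ⟨fun ω => ?_⟩)
  have := Nat.card_le_card_of_injective _ ω.2.2.2.2
  simp only [Nat.card_eq_fintype_card, Fintype.card_fin] at this
  omega

theorem sawCount_add_le [DecidableEq ι] [Fintype β] (a b : ℕ) (x : ι → β) :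
    sawCount (a + b) x ≤ ∑ y, sawCount a (x - y) * sawCount b y := by
  let split : {ω // IsSAWTo (a + b) x ω} →
      Σ m : ι → β, {ω // IsSAWTo a m ω} × {ω // IsSAWTo b (x - m) ω} :=
    fun ω => ⟨_, ⟨_, ω.2.head⟩, ⟨_, ω.2.tail⟩⟩
  have hsplit : Function.Injective split := fun ω ω' h =>
    Subtype.ext <| eq_of_walkHead_eq_of_walkTail_eq (congrArg (fun s => s.2.1.val) h)
      (congrArg (fun s => s.2.2.val) h)
  calc sawCount (a + b) x
      ≤ Nat.card (Σ m : ι → β, {ω // IsSAWTo a m ω} × {ω // IsSAWTo b (x - m) ω}) :=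
        Nat.card_le_card_of_injective split hsplit
    _ = ∑ m, sawCount a m * sawCount b (x - m) := by
        simp only [Nat.card_sigma, Nat.card_prod, sawCount]
    _ = ∑ y, sawCount a (x - y) * sawCount b y :=
        Fintype.sum_equiv (Equiv.subLeft x) _ _ fun m => by simp

end SelfAvoidingWalks

theorem summable_natCast_mul_of_eventually_eq_zero {α : Type*} {c : ℕ → α → ℕ}
    (hc : ∀ᶠ n in atTop, c n = 0) (y : α) (f : ℕ → ℝ) : Summable fun n => (c n y : ℝ) * f n :=
  summable_zero.congr_atTop <| hc.mono fun n hn => by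
    simp only [hn, Pi.zero_apply, Nat.cast_zero, zero_mul]

section GeneratingFunctions

variable {V : Type*} [AddCommGroup V] [Fintype V] {c : ℕ → V → ℕ}
  (hsplit : ∀ a b x, c (a + b) x ≤ ∑ y, c a (x - y) * c b y)
include hsplit

theorem succ_mul_le_sum_sum_antidiagonal (n : ℕ) (x : V) :
    (n + 1) * c (n + 1) x ≤ ∑ y, ∑ p ∈ antidiagonal n, c (p.1 + 1) (x - y) * c p.2 y := by
  rw [sum_comm]
  calc (n + 1) * c (n + 1) x = ∑ p ∈ antidiagonal n, c (p.1 + 1 + p.2) x := by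
        rw [sum_congr rfl fun p hp => by rw [add_right_comm, mem_antidiagonal.mp hp],
          sum_const, Nat.card_antidiagonal, smul_eq_mul]
    _ ≤ _ := sum_le_sum fun p _ => hsplit _ _ _

theorem succ_mul_mul_pow_le_sum_sum_antidiagonal {z : ℝ} (hz : 0 ≤ z) (n : ℕ) (x : V) :
    ((n + 1 : ℕ) : ℝ) * c (n + 1) x * z ^ (n + 1) ≤
      ∑ y, ∑ p ∈ antidiagonal n,
        (c (p.1 + 1) (x - y) : ℝ) * z ^ (p.1 + 1) * ((c p.2 y : ℝ) * z ^ p.2) := by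
  calc ((n + 1 : ℕ) : ℝ) * c (n + 1) x * z ^ (n + 1)
      = (((n + 1) * c (n + 1) x : ℕ) : ℝ) * z ^ (n + 1) := by push_cast; ring
    _ ≤ ((∑ y, ∑ p ∈ antidiagonal n, c (p.1 + 1) (x - y) * c p.2 y : ℕ) : ℝ) * z ^ (n + 1) := by
        gcongr
        exact succ_mul_le_sum_sum_antidiagonal hsplit n x
    _ = _ := by
        push_cast
        simp only [sum_mul]
        refine sum_congr rfl fun y _ => sum_congr rfl fun p hp => ?_
        rw [← mem_antidiagonal.mp hp]
        ring

theorem tsum_succ_mul_mul_pow_le_sum_tsum_mul_tsum (hc : ∀ᶠ n in atTop, c n = 0) {z : ℝ}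
    (hz : 0 ≤ z) (x : V) :
    ∑' n, ((n + 1 : ℕ) : ℝ) * c (n + 1) x * z ^ (n + 1) ≤
      ∑ y, (∑' n, (c (n + 1) (x - y) : ℝ) * z ^ (n + 1)) * ∑' n, (c n y : ℝ) * z ^ n := by
  have hH : ∀ y, Summable fun n => (c (n + 1) y : ℝ) * z ^ (n + 1) := fun y =>
    (summable_nat_add_iff 1).mpr (summable_natCast_mul_of_eventually_eq_zero hc y (z ^ ·))
  have hG : ∀ y, Summable fun n => (c n y : ℝ) * z ^ n :=
    fun y => summable_natCast_mul_of_eventually_eq_zero hc y (z ^ ·)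
  have hprod : ∀ y, Summable fun p : ℕ × ℕ =>
      (c (p.1 + 1) (x - y) : ℝ) * z ^ (p.1 + 1) * ((c p.2 y : ℝ) * z ^ p.2) := fun y =>
    (hH (x - y)).mul_of_nonneg (hG y) (fun _ => by positivity) (fun _ => by positivity)
  have hcauchy : ∀ y, Summable fun n => ∑ p ∈ antidiagonal n,
      (c (p.1 + 1) (x - y) : ℝ) * z ^ (p.1 + 1) * ((c p.2 y : ℝ) * z ^ p.2) :=
    fun y => summable_sum_mul_antidiagonal_of_summable_mul
      (f := fun n => (c (n + 1) (x - y) : ℝ) * z ^ (n + 1)) (g := fun n => (c n y : ℝ) * z ^ n)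
      (hprod y)
  have hderiv : Summable fun n => ((n + 1 : ℕ) : ℝ) * c (n + 1) x * z ^ (n + 1) :=
    ((summable_nat_add_iff 1).mpr
      (summable_natCast_mul_of_eventually_eq_zero hc x fun n => n * z ^ n)).congr
      fun n => by ring
  calc ∑' n, ((n + 1 : ℕ) : ℝ) * c (n + 1) x * z ^ (n + 1)
      ≤ ∑' n, ∑ y, ∑ p ∈ antidiagonal n,
          (c (p.1 + 1) (x - y) : ℝ) * z ^ (p.1 + 1) * ((c p.2 y : ℝ) * z ^ p.2) :=
        Summable.tsum_le_tsum (succ_mul_mul_pow_le_sum_sum_antidiagonal hsplit hz · x) hderiv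
          (summable_sum fun y _ => hcauchy y)
    _ = ∑ y, ∑' n, ∑ p ∈ antidiagonal n,
          (c (p.1 + 1) (x - y) : ℝ) * z ^ (p.1 + 1) * ((c p.2 y : ℝ) * z ^ p.2) :=
        Summable.tsum_finsetSum fun y _ => hcauchy y
    _ = _ := sum_congr rfl fun y _ =>
        ((hH (x - y)).tsum_mul_tsum_eq_tsum_sum_antidiagonal (hG y) (hprod y)).symm

end GeneratingFunctions

/-- For `z ≥ 0`, `z ∂_z H_z(x) ≤ (H_z * G_z)(x)`. -/
theorem zdz_H_le_H_conv_G (N : ℕ) (z : ℝ) (hz : 0 ≤ z) (x : Fin N → ZMod 2) :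
    (∑' n : ℕ, ((n + 1 : ℕ) : ℝ) * (sawCountTo N (n + 1) x : ℝ) * z ^ (n + 1))
      ≤ ∑ y : Fin N → ZMod 2, Hgen N z (x - y) * Ggen N z y := by
  have hvanish := sawCount_eventually_eq_zero (ι := Fin N) (β := ZMod 2)
  have hH : ∀ w, Hgen N z w = ∑' n, (sawCount (n + 1) w : ℝ) * z ^ (n + 1) := fun w => by
    rw [Hgen, sawCountTo_eq_sawCount]
  have hG : ∀ y, Ggen N z y = ∑' n, (sawCount n y : ℝ) * z ^ n := fun y => by
    rw [(summable_natCast_mul_of_eventually_eq_zero hvanish y (z ^ ·)).tsum_eq_zero_add,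
      sawCount_zero, Ggen, hH, pow_zero, mul_one, Nat.cast_ite, Nat.cast_one, Nat.cast_zero]
  simp only [hG, hH, sawCountTo_eq_sawCount]
  exact tsum_succ_mul_mul_pow_le_sum_tsum_mul_tsum (V := Fin N → ZMod 2) sawCount_add_le
    hvanish hz x
end
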